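/- arXiv:1603.07312 — 5 statements merged into one kernel-verified Lean document; each statement's English description precedes it below -/
import Mathlib

section
/- Let n ≥ 1, let F be a forest on the vertex set {1,…,n} (an acyclic set of edges of the complete graph K_n), and let w = (w_ℓ)_{ℓ∈F} with w_ℓ ∈ [0,1] for each edge ℓ of F. Then the symmetric n×n real matrix X^F(w) defined by X^F_{ii}(w) = 1 and, for i ≠ j, X^F_{ij}(w) = min{w_{ℓ'} : ℓ' on the unique path in F from i to j} if i and j are in the same connected component of F and X^F_{ij}(w) = 0 otherwise, is positive semidefinite. -/
/-!
For `t ∈ (0, 1]` the relation `t ≤ X_ij` is an equivalence relation: `X_ii = 1`, and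
`min (X_ij) (X_jk) ≤ X_ik` because walks from `i` to `j` and from `j` to `k` concatenate.
The indicator matrix of an equivalence relation is the sum of `1_C 1_Cᵀ` over its classes `C`,
hence positive semidefinite, and `X = ∫₀¹ 1[t ≤ X] dt` is an average of such matrices.
-/

/-- The graph on `Fin n` spanned by a finite set of edges. -/
def edgeGraph (n : ℕ) (F : Finset (Sym2 (Fin n))) : SimpleGraph (Fin n) :=
  SimpleGraph.fromEdgeSet (↑F : Set (Sym2 (Fin n)))

/-- A forest on `{1, …, n}`: a set of non-diagonal edges of the complete graph `K_n`
spanning an acyclic graph. -/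
def IsForestKn (n : ℕ) (F : Finset (Sym2 (Fin n))) : Prop :=
  (∀ e ∈ F, ¬ e.IsDiag) ∧ (edgeGraph n F).IsAcyclic

/-- The matrix entry `X^F_{ij}(w)`: `1` on the diagonal, and for `i ≠ j` the minimum of
`w_ℓ'` over the edges `ℓ'` of the unique path from `i` to `j` in the forest `F` if `i`
and `j` are `F`-connected, `0` otherwise.  (For `i ≠ j` this is expressed as the
supremum, over walks `p` from `i` to `j` in `F`, of the minimum of `w` over the edges
of `p`; in a forest every walk from `i` to `j` passes through all edges of the unique
path, so this supremum is exactly the minimum of `w` along that path, and the empty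
supremum is `0` by convention when `i` and `j` are not connected.) -/
noncomputable def XF (n : ℕ) (F : Finset (Sym2 (Fin n))) (w : Sym2 (Fin n) → ℝ)
    (i j : Fin n) : ℝ :=
  if i = j then 1
  else sSup {m : ℝ | ∃ p : (edgeGraph n F).Walk i j, ∀ e ∈ p.edges, m ≤ w e}

open MeasureTheory Set

theorem setIntegral_Ioc_zero_one_indicator_Iic {a : ℝ} (h0 : 0 ≤ a) (h1 : a ≤ 1) :
    ∫ t in Ioc (0 : ℝ) 1, (Iic a).indicator 1 t = a := by
  rw [integral_indicator_one measurableSet_Iic, measureReal_restrict_apply measurableSet_Iic,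
    Iic_inter_Ioc_of_le h1, Real.volume_real_Ioc_of_le h0, sub_zero]

section QuadraticForm

variable {ι : Type*} [Fintype ι]

theorem sum_sum_mul_ite_eq_nonneg {κ : Type*} [Fintype κ] [DecidableEq κ] (f : ι → κ)
    (x : ι → ℝ) : 0 ≤ ∑ i, ∑ j, x i * x j * if f i = f j then 1 else 0 := by
  have sum_sq : ∑ c, (∑ i, if f i = c then x i else 0) ^ 2 =
      ∑ i, ∑ j, x i * x j * if f i = f j then 1 else 0 := by
    simp_rw [sq, Finset.sum_mul_sum, ite_mul, mul_ite, zero_mul, mul_zero, ite_self]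
    rw [Finset.sum_comm]
    refine Finset.sum_congr rfl fun i _ => ?_
    rw [Finset.sum_comm]
    refine Finset.sum_congr rfl fun j _ => ?_
    simp [eq_comm]
  rw [← sum_sq]
  positivity

theorem sum_sum_mul_ite_nonneg_of_equivalence {r : ι → ι → Prop} [DecidableRel r]
    (hr : Equivalence r) (x : ι → ℝ) : 0 ≤ ∑ i, ∑ j, x i * x j * if r i j then 1 else 0 := by
  classical
  let S : Setoid ι := ⟨r, hr⟩
  convert sum_sum_mul_ite_eq_nonneg (Quotient.mk S) x using 6
  exact (Quotient.eq (r := S)).symm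

theorem sum_sum_mul_mul_nonneg_of_min_le (s : ι → ι → ℝ)
    (hs0 : ∀ i j, 0 ≤ s i j) (hdiag : ∀ i, s i i = 1) (hsymm : ∀ i j, s i j = s j i)
    (hmin : ∀ i j k, min (s i j) (s j k) ≤ s i k) (x : ι → ℝ) :
    0 ≤ ∑ i, ∑ j, x i * s i j * x j := by
  have hs1 (i j : ι) : s i j ≤ 1 := by simpa [hsymm j i, hdiag] using hmin i j i
  have layer (i j : ι) : x i * s i j * x j =
      ∫ t in Ioc (0 : ℝ) 1, x i * x j * (Iic (s i j)).indicator 1 t := by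
    rw [integral_const_mul, setIntegral_Ioc_zero_one_indicator_Iic (hs0 i j) (hs1 i j)]
    ring
  have integrable (i j : ι) :
      IntegrableOn (fun t => x i * x j * (Iic (s i j)).indicator 1 t) (Ioc (0 : ℝ) 1) :=
    ((integrableOn_const (C := (1 : ℝ)) measure_Ioc_lt_top.ne).indicator
      measurableSet_Iic).const_mul _
  have threshold (t : ℝ) (ht : t ∈ Ioc (0 : ℝ) 1) : Equivalence fun i j => t ≤ s i j :=
    ⟨fun i => (hdiag i).symm ▸ ht.2, fun h => hsymm _ _ ▸ h,
      fun hij hjk => (le_min hij hjk).trans (hmin _ _ _)⟩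
  calc 0 ≤ ∫ t in Ioc (0 : ℝ) 1, ∑ i, ∑ j, x i * x j * (Iic (s i j)).indicator 1 t :=
        setIntegral_nonneg measurableSet_Ioc fun t ht => by
          simpa [indicator_apply] using sum_sum_mul_ite_nonneg_of_equivalence (threshold t ht) x
    _ = ∑ i, ∑ j, x i * s i j * x j := by
        rw [integral_finsetSum _ fun i _ => integrable_finsetSum _ fun j _ => integrable i j]
        simp_rw [layer]
        refine Finset.sum_congr rfl fun i _ => ?_
        rw [integral_finsetSum _ fun j _ => integrable i j]

end QuadraticForm

namespace SimpleGraph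

variable {V : Type*} {G : SimpleGraph V} {w : Sym2 V → ℝ} {i j k : V} {c : ℝ}

theorem le_one_of_forall_le_weight (hw1 : ∀ e ∈ G.edgeSet, w e ≤ 1) (hij : i ≠ j)
    (p : G.Walk i j) (hp : ∀ e ∈ p.edges, c ≤ w e) : c ≤ 1 := by
  obtain ⟨e, he⟩ :=
    List.exists_mem_of_ne_nil _ (Walk.edges_eq_nil.not.mpr (Walk.not_nil_of_ne hij))
  exact (hp e he).trans (hw1 e (p.edges_subset_edgeSet he))

variable [DecidableEq V]

variable (G w) in
noncomputable def bottleneck (i j : V) : ℝ :=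
  if i = j then 1 else sSup {m : ℝ | ∃ p : G.Walk i j, ∀ e ∈ p.edges, m ≤ w e}

@[simp]
theorem bottleneck_self (i : V) : G.bottleneck w i i = 1 := if_pos rfl

theorem bottleneck_of_ne (hij : i ≠ j) :
    G.bottleneck w i j = sSup {m : ℝ | ∃ p : G.Walk i j, ∀ e ∈ p.edges, m ≤ w e} :=
  if_neg hij

theorem bottleneck_comm (i j : V) : G.bottleneck w i j = G.bottleneck w j i := by
  rcases eq_or_ne i j with rfl | hij
  · rfl
  rw [bottleneck_of_ne hij, bottleneck_of_ne hij.symm]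
  congr 1
  ext m
  exact ⟨fun ⟨p, hp⟩ => ⟨p.reverse, by simpa using hp⟩,
    fun ⟨p, hp⟩ => ⟨p.reverse, by simpa using hp⟩⟩

theorem bottleneck_le_one (hw1 : ∀ e ∈ G.edgeSet, w e ≤ 1) (i j : V) :
    G.bottleneck w i j ≤ 1 := by
  rcases eq_or_ne i j with rfl | hij
  · simp
  rw [bottleneck_of_ne hij]
  exact Real.sSup_le (fun m ⟨p, hp⟩ => le_one_of_forall_le_weight hw1 hij p hp) zero_le_one

theorem le_bottleneck_of_walk (hw1 : ∀ e ∈ G.edgeSet, w e ≤ 1) (hij : i ≠ j) (p : G.Walk i j)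
    (hp : ∀ e ∈ p.edges, c ≤ w e) : c ≤ G.bottleneck w i j := by
  rw [bottleneck_of_ne hij]
  exact le_csSup ⟨1, fun m ⟨q, hq⟩ => le_one_of_forall_le_weight hw1 hij q hq⟩ ⟨p, hp⟩

theorem exists_walk_of_lt_bottleneck (hij : i ≠ j) (hc : 0 ≤ c) (h : c < G.bottleneck w i j) :
    ∃ p : G.Walk i j, ∀ e ∈ p.edges, c ≤ w e := by
  rw [bottleneck_of_ne hij] at h
  have hne : {m : ℝ | ∃ p : G.Walk i j, ∀ e ∈ p.edges, m ≤ w e}.Nonempty := by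
    by_contra hempty
    rw [not_nonempty_iff_eq_empty.mp hempty, Real.sSup_empty] at h
    exact hc.not_gt h
  obtain ⟨m, ⟨p, hp⟩, hcm⟩ := exists_lt_of_lt_csSup hne h
  exact ⟨p, fun e he => hcm.le.trans (hp e he)⟩

theorem bottleneck_nonneg (hw0 : ∀ e ∈ G.edgeSet, 0 ≤ w e) (hw1 : ∀ e ∈ G.edgeSet, w e ≤ 1)
    (i j : V) : 0 ≤ G.bottleneck w i j := by
  rcases eq_or_ne i j with rfl | hij
  · simp
  by_cases hreach : G.Reachable i j
  · obtain ⟨p⟩ := hreach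
    exact le_bottleneck_of_walk hw1 hij p fun e he => hw0 e (p.edges_subset_edgeSet he)
  · have no_walk : {m : ℝ | ∃ p : G.Walk i j, ∀ e ∈ p.edges, m ≤ w e} = ∅ :=
      eq_empty_of_forall_notMem fun _ ⟨p, _⟩ => hreach ⟨p⟩
    rw [bottleneck_of_ne hij, no_walk, Real.sSup_empty]

theorem min_bottleneck_le (hw0 : ∀ e ∈ G.edgeSet, 0 ≤ w e) (hw1 : ∀ e ∈ G.edgeSet, w e ≤ 1)
    (i j k : V) : min (G.bottleneck w i j) (G.bottleneck w j k) ≤ G.bottleneck w i k := by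
  rcases eq_or_ne i j with rfl | hij
  · exact min_le_right _ _
  rcases eq_or_ne j k with rfl | hjk
  · exact min_le_left _ _
  rcases eq_or_ne i k with rfl | hik
  · simpa using (min_le_left _ _).trans (bottleneck_le_one hw1 i j)
  refine le_of_forall_lt_imp_le_of_dense fun c hc => ?_
  rcases lt_or_ge c 0 with hc0 | hc0
  · exact hc0.le.trans (bottleneck_nonneg hw0 hw1 i k)
  obtain ⟨p, hp⟩ := exists_walk_of_lt_bottleneck hij hc0 (lt_min_iff.mp hc).1
  obtain ⟨q, hq⟩ := exists_walk_of_lt_bottleneck hjk hc0 (lt_min_iff.mp hc).2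
  refine le_bottleneck_of_walk hw1 hik (p.append q) fun e he => ?_
  rw [Walk.edges_append, List.mem_append] at he
  exact he.elim (hp e) (hq e)

end SimpleGraph

theorem XF_eq_bottleneck (n : ℕ) (F : Finset (Sym2 (Fin n))) (w : Sym2 (Fin n) → ℝ) :
    XF n F w = (edgeGraph n F).bottleneck w :=
  rfl

theorem XF_posSemidef_general (n : ℕ) (F : Finset (Sym2 (Fin n)))
    (w : Sym2 (Fin n) → ℝ)
    (hw : ∀ e ∈ F, 0 ≤ w e ∧ w e ≤ 1) :
    ∀ x : Fin n → ℝ, 0 ≤ ∑ i, ∑ j, x i * XF n F w i j * x j := by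
  have mem_F (e : Sym2 (Fin n)) (he : e ∈ (edgeGraph n F).edgeSet) : e ∈ F := by
    rw [edgeGraph, SimpleGraph.edgeSet_fromEdgeSet] at he
    exact he.1
  have hw0 (e : Sym2 (Fin n)) (he : e ∈ (edgeGraph n F).edgeSet) : 0 ≤ w e := (hw e (mem_F e he)).1
  have hw1 (e : Sym2 (Fin n)) (he : e ∈ (edgeGraph n F).edgeSet) : w e ≤ 1 := (hw e (mem_F e he)).2
  rw [XF_eq_bottleneck]
  exact sum_sum_mul_mul_nonneg_of_min_le _ (SimpleGraph.bottleneck_nonneg hw0 hw1)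
    SimpleGraph.bottleneck_self SimpleGraph.bottleneck_comm
    (SimpleGraph.min_bottleneck_le hw0 hw1)

/-- **Positivity of the forest-interpolation matrices.**  For any forest `F` on
`{1, …, n}` and any weights `w_ℓ ∈ [0,1]` on its edges, the symmetric matrix `X^F(w)`
is positive semidefinite. -/
theorem XF_posSemidef (n : ℕ) (hn : 1 ≤ n) (F : Finset (Sym2 (Fin n)))
    (hF : IsForestKn n F) (w : Sym2 (Fin n) → ℝ)
    (hw : ∀ e ∈ F, 0 ≤ w e ∧ w e ≤ 1) :
    ∀ x : Fin n → ℝ, 0 ≤ ∑ i, ∑ j, x i * XF n F w i j * x j :=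
  XF_posSemidef_general n F w hw
end

section
/- Let n ≥ 1, let F be a forest on {1,…,n} with edges ℓ_1,…,ℓ_k, and let w = (w_{ℓ_i}) ∈ [0,1]^k satisfy the ordering w_{ℓ_1} ≥ w_{ℓ_2} ≥ ⋯ ≥ w_{ℓ_k}. For 1 ≤ i ≤ k let Π_i be the partition of {1,…,n} into the connected components of the forest with edge set {ℓ_1,…,ℓ_i}, and let X^{Π_i} be the block matrix of Π_i. Then X^F(w) = (1 − w_{ℓ_1}) Id + Σ_{i=1}^{k−1} (w_{ℓ_i} − w_{ℓ_{i+1}}) X^{Π_i} + w_{ℓ_k} X^{Π_k}; in particular, on this sector X^F(w) is a convex barycentric combination of the identity and block partition matrices. -/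
open scoped Classical in
/-- The block matrix `X^Π` of the partition `Π` of `{1, …, n}` into the connected
components of the forest with edges `ℓ_1, …, ℓ_{i+1}` (here `E 0, …, E i`):
`X^Π_{ab} = 1` if `a` and `b` lie in the same block, `0` otherwise. -/
noncomputable def blockMat (n : ℕ) (E : ℕ → Sym2 (Fin n)) (i : ℕ) (a b : Fin n) : ℝ :=
  if (edgeGraph n ((Finset.range (i + 1)).image E)).Reachable a b then 1 else 0

/-!
Fix `a ≠ b` joined in `F` and let `E j` be the edge whose addition first joins them. Then
`X^{Π_i}_{ab} = [j ≤ i]`, so the right-hand side telescopes to `w (E j)`. Every walk from `a`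
to `b` through the first `j + 1` edges uses `E j`, so the unique path of the forest `F` from
`a` to `b` consists of `E j` and earlier, hence heavier, edges: its bottleneck `X^F_{ab}(w)`
is `w (E j)` as well.
-/

open Finset

namespace SimpleGraph

variable {V : Type*} {G : SimpleGraph V}

theorem IsAcyclic.edges_subset_of_isPath (hG : G.IsAcyclic) {a b : V} {p : G.Walk a b}
    (hp : p.IsPath) (r : G.Walk a b) : p.edges ⊆ r.edges := by
  classical
  have : r.bypass = p :=
    congrArg Subtype.val ((hG.subsingleton_path a b).elim ⟨r.bypass, r.bypass_isPath⟩ ⟨p, hp⟩)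
  exact this ▸ r.edges_bypass_subset_edges

theorem IsAcyclic.sSup_walk_min_eq (hG : G.IsAcyclic) (w : Sym2 V → ℝ) {a b : V}
    {p : G.Walk a b} (hp : p.IsPath) {e : Sym2 V} (he : e ∈ p.edges)
    (hmin : ∀ e' ∈ p.edges, w e ≤ w e') :
    sSup {x : ℝ | ∃ r : G.Walk a b, ∀ e' ∈ r.edges, x ≤ w e'} = w e :=
  IsGreatest.csSup_eq ⟨⟨p, hmin⟩, fun _ ⟨r, hr⟩ => hr e (hG.edges_subset_of_isPath hp r he)⟩

theorem sSup_walk_min_of_not_reachable (w : Sym2 V → ℝ) {a b : V} (h : ¬ G.Reachable a b) :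
    sSup {x : ℝ | ∃ r : G.Walk a b, ∀ e' ∈ r.edges, x ≤ w e'} = 0 := by
  convert Real.sSup_empty
  exact Set.eq_empty_of_forall_notMem fun _ ⟨r, _⟩ => h ⟨r⟩

end SimpleGraph

section edgeGraph

variable {n : ℕ}

theorem mem_edgeSet_edgeGraph {F : Finset (Sym2 (Fin n))} {e : Sym2 (Fin n)} :
    e ∈ (edgeGraph n F).edgeSet ↔ e ∈ F ∧ ¬ e.IsDiag := by
  simp [edgeGraph, SimpleGraph.edgeSet_fromEdgeSet]

theorem edgeGraph_mono {F F' : Finset (Sym2 (Fin n))} (h : F ⊆ F') :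
    edgeGraph n F ≤ edgeGraph n F' :=
  SimpleGraph.fromEdgeSet_mono (coe_subset.mpr h)

theorem reachable_edgeGraph_of_notMem_edges [DecidableEq (Sym2 (Fin n))]
    {F F' : Finset (Sym2 (Fin n))} {e : Sym2 (Fin n)} (hF' : F' ⊆ insert e F) {a b : Fin n}
    (r : (edgeGraph n F').Walk a b) (he : e ∉ r.edges) : (edgeGraph n F).Reachable a b := by
  refine ⟨r.transfer _ fun e' he' => ?_⟩
  obtain ⟨hmem, hdiag⟩ := mem_edgeSet_edgeGraph.mp (r.edges_subset_edgeSet he')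
  refine mem_edgeSet_edgeGraph.mpr ⟨?_, hdiag⟩
  exact (mem_insert.mp (hF' hmem)).resolve_left fun h => he (h ▸ he')

end edgeGraph

section prefixForest

variable {n : ℕ} (E : ℕ → Sym2 (Fin n)) {a b : Fin n}

theorem reachable_prefix_mono {i j : ℕ} (hij : i ≤ j)
    (h : (edgeGraph n ((range i).image E)).Reachable a b) :
    (edgeGraph n ((range j).image E)).Reachable a b :=
  h.mono (edgeGraph_mono (image_subset_image (range_subset_range.mpr hij)))

/-- `j` is the index of the edge that first joins `a` and `b`. -/
theorem exists_reachable_prefix_iff (hab : a ≠ b) {k : ℕ}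
    (h : (edgeGraph n ((range k).image E)).Reachable a b) :
    ∃ j < k, ∀ i, (edgeGraph n ((range i).image E)).Reachable a b ↔ j < i := by
  classical
  have hex : ∃ i, (edgeGraph n ((range i).image E)).Reachable a b := ⟨k, h⟩
  have hfind : ∀ i, (edgeGraph n ((range i).image E)).Reachable a b ↔ Nat.find hex ≤ i :=
    fun i => ⟨Nat.find_min' hex, fun hi => reachable_prefix_mono E hi (Nat.find_spec hex)⟩
  have hpos : ¬ Nat.find hex ≤ 0 := (hfind 0).not.mp <| by
    simpa [edgeGraph, SimpleGraph.fromEdgeSet_empty, SimpleGraph.reachable_bot] using hab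
  refine ⟨Nat.find hex - 1, ?_, fun i => (hfind i).trans ?_⟩
  · have := (hfind k).mp h
    omega
  · omega

theorem mem_edges_of_not_reachable_prefix {j : ℕ}
    (hj : ¬ (edgeGraph n ((range j).image E)).Reachable a b)
    (r : (edgeGraph n ((range (j + 1)).image E)).Walk a b) : E j ∈ r.edges := by
  classical
  by_contra he
  refine hj (reachable_edgeGraph_of_notMem_edges ?_ r he)
  rw [range_add_one, image_insert]

end prefixForest

theorem sum_range_sub_mul_ite_le_add (g : ℕ → ℝ) {j K : ℕ} (hj : j ≤ K) :
    ∑ i ∈ range K, (g i - g (i + 1)) * (if j ≤ i then 1 else 0) + g K = g j := by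
  induction K, hj using Nat.le_induction with
  | base => simp +contextual [sum_eq_zero]
  | succ K hK ih =>
    rw [sum_range_succ, if_pos hK, ← ih]
    ring

theorem XF_eq_weight_of_reachable_prefix_iff {n k : ℕ} (E : ℕ → Sym2 (Fin n))
    (hF : (edgeGraph n ((range k).image E)).IsAcyclic) (w : Sym2 (Fin n) → ℝ)
    (hmono : ∀ i j : ℕ, i ≤ j → j < k → w (E j) ≤ w (E i)) {a b : Fin n} (hab : a ≠ b)
    {j : ℕ} (hjk : j < k)
    (hj : ∀ i, (edgeGraph n ((range i).image E)).Reachable a b ↔ j < i) :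
    XF n ((range k).image E) w a b = w (E j) := by
  obtain ⟨r⟩ := (hj (j + 1)).mpr (lt_add_one j)
  have hjmem : E j ∈ r.bypass.edges :=
    mem_edges_of_not_reachable_prefix E (fun h => lt_irrefl j ((hj j).mp h)) _
  have hmin : ∀ e ∈ r.bypass.edges, w (E j) ≤ w e := by
    intro e he
    obtain ⟨i, hi, rfl⟩ :=
      mem_image.mp (mem_edgeSet_edgeGraph.mp (r.bypass.edges_subset_edgeSet he)).1
    exact hmono i j (Nat.lt_add_one_iff.mp (mem_range.mp hi)) hjk
  have hle : edgeGraph n ((range (j + 1)).image E) ≤ edgeGraph n ((range k).image E) :=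
    edgeGraph_mono (image_subset_image (range_subset_range.mpr hjk))
  rw [XF, if_neg hab]
  exact hF.sSup_walk_min_eq w (r.bypass_isPath.mapLe hle)
    (by rwa [SimpleGraph.Walk.edges_mapLe_eq_edges])
    (by rwa [SimpleGraph.Walk.edges_mapLe_eq_edges])

theorem XF_sector_decomposition_general (n k : ℕ) (hk : 1 ≤ k)
    (E : ℕ → Sym2 (Fin n))
    (F : Finset (Sym2 (Fin n))) (hFE : F = (Finset.range k).image E)
    (hF : IsForestKn n F)
    (w : Sym2 (Fin n) → ℝ)
    (hmono : ∀ i j : ℕ, i ≤ j → j < k → w (E j) ≤ w (E i))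
    (a b : Fin n) :
    XF n F w a b =
      (1 - w (E 0)) * (if a = b then 1 else 0)
        + ∑ i ∈ Finset.range (k - 1), (w (E i) - w (E (i + 1))) * blockMat n E i a b
        + w (E (k - 1)) * blockMat n E (k - 1) a b := by
  subst hFE
  by_cases hab : a = b
  · subst hab
    simp only [XF, blockMat, SimpleGraph.Reachable.refl, if_true, mul_one]
    rw [sum_range_sub']
    ring
  by_cases hr : (edgeGraph n ((range k).image E)).Reachable a b
  · obtain ⟨j, hjk, hj⟩ := exists_reachable_prefix_iff E hab hr
    have hblock : ∀ i, blockMat n E i a b = if j ≤ i then 1 else 0 := fun i => by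
      simp only [blockMat, hj, Nat.lt_add_one_iff]
    simp only [XF_eq_weight_of_reachable_prefix_iff E hF.2 w hmono hab hjk hj, hblock, if_neg hab,
      if_pos (Nat.le_sub_one_of_lt hjk), mul_zero, mul_one, zero_add]
    exact (sum_range_sub_mul_ite_le_add (fun i => w (E i)) (Nat.le_sub_one_of_lt hjk)).symm
  · have hblock : ∀ i < k, blockMat n E i a b = 0 := fun i hi =>
      if_neg fun h => hr (reachable_prefix_mono E hi h)
    rw [XF, if_neg hab, SimpleGraph.sSup_walk_min_of_not_reachable w hr, if_neg hab,
      hblock (k - 1) (by omega), sum_eq_zero fun i hi => by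
        rw [hblock i (by rw [mem_range] at hi; omega), mul_zero]]
    ring

/-- **Sector decomposition of `X^F(w)` as a barycentric combination of block matrices.**
Let `F` be a forest with edges `ℓ_1, …, ℓ_k` (here `E 0, …, E (k-1)`) and let the
weights satisfy `1 ≥ w_{ℓ_1} ≥ ⋯ ≥ w_{ℓ_k} ≥ 0`.  With `Π_i` the partition of
`{1, …, n}` into connected components of `{ℓ_1, …, ℓ_i}`, one has
`X^F(w) = (1 - w_{ℓ_1}) Id + Σ_{i=1}^{k-1} (w_{ℓ_i} - w_{ℓ_{i+1}}) X^{Π_i} + w_{ℓ_k} X^{Π_k}`,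
a convex barycentric combination of the identity and block partition matrices. -/
theorem XF_sector_decomposition (n k : ℕ) (hn : 1 ≤ n) (hk : 1 ≤ k)
    (E : ℕ → Sym2 (Fin n))
    (hinj : ∀ i < k, ∀ j < k, E i = E j → i = j)
    (F : Finset (Sym2 (Fin n))) (hFE : F = (Finset.range k).image E)
    (hF : IsForestKn n F)
    (w : Sym2 (Fin n) → ℝ)
    (hw : ∀ i < k, 0 ≤ w (E i) ∧ w (E i) ≤ 1)
    (hmono : ∀ i j : ℕ, i ≤ j → j < k → w (E j) ≤ w (E i))
    (a b : Fin n) :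
    XF n F w a b =
      (1 - w (E 0)) * (if a = b then 1 else 0)
        + ∑ i ∈ Finset.range (k - 1), (w (E i) - w (E (i + 1))) * blockMat n E i a b
        + w (E (k - 1)) * blockMat n E (k - 1) a b :=
  XF_sector_decomposition_general n k hk E F hFE hF w hmono a b
end

section
/- Let H be a complex Hilbert space and A a bounded self-adjoint operator on H. Let λ ∈ ℂ with λ ∉ (−∞, 0], written λ = ρ e^{iφ} with ρ > 0 and φ ∈ (−π, π), and let √λ = √ρ e^{iφ/2} denote the principal square root. Then the operator 1 − i√λ A is invertible and its inverse, the resolvent R = (1 − i√λ A)^{−1}, satisfies the operator norm bound ‖R‖ ≤ 1/cos(φ/2). -/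
/-!
For self-adjoint `A` the number `⟪y, A y⟫` is real, so `Im ⟪y, (w - A) y⟫ = Im w ‖y‖²` and
Cauchy–Schwarz gives `‖(w - A) y‖ ≥ |Im w| ‖y‖`. Writing `1 - z A = z (z⁻¹ - A)` with
`Im z ≠ 0`, the factor `z⁻¹ - A` is invertible because the spectrum of `A` is real, and the
lower bound becomes `‖(1 - z A) y‖ ≥ (|Im z| / |z|) ‖y‖`. For `z = i √ρ e^{iφ/2}` the ratio
`|Im z| / |z|` is `cos (φ/2)`, the distance from `1` to the line `ℝ z` carrying the spectrum
of `z A`.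
-/

open ContinuousLinearMap

theorem ContinuousLinearMap.opNorm_le_of_comp_eq_id {𝕜 E F : Type*} [NontriviallyNormedField 𝕜]
    [SeminormedAddCommGroup E] [SeminormedAddCommGroup F] [NormedSpace 𝕜 E] [NormedSpace 𝕜 F]
    {S : E →L[𝕜] F} {R : F →L[𝕜] E} (hSR : S.comp R = .id 𝕜 F) {C : ℝ} (hC : 0 ≤ C)
    (h : ∀ y, ‖y‖ ≤ C * ‖S y‖) : ‖R‖ ≤ C :=
  opNorm_le_bound R hC fun x => by simpa [← comp_apply, hSR] using h (R x)

section

variable {E : Type*} [NormedAddCommGroup E] [InnerProductSpace ℂ E] [CompleteSpace E]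
    {A : E →L[ℂ] E}

theorem IsSelfAdjoint.abs_im_mul_norm_le_norm_smul_sub_apply (hA : IsSelfAdjoint A) (w : ℂ)
    (y : E) : |w.im| * ‖y‖ ≤ ‖w • y - A y‖ := by
  have him : (inner ℂ y (w • y - A y)).im = w.im * ‖y‖ ^ 2 := by
    have hreal : (inner ℂ y (A y)).im = 0 := hA.isSymmetric.im_inner_self_apply y
    rw [inner_sub_right, inner_smul_right, inner_self_eq_norm_sq_to_K, Complex.sub_im, hreal,
      sub_zero]
    simp [Complex.mul_im, ← Complex.ofReal_pow]
  have hsq : |w.im| * ‖y‖ * ‖y‖ ≤ ‖w • y - A y‖ * ‖y‖ := calc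
    |w.im| * ‖y‖ * ‖y‖ = |(inner ℂ y (w • y - A y)).im| := by
      rw [him, abs_mul, abs_of_nonneg (sq_nonneg ‖y‖)]; ring
    _ ≤ ‖inner ℂ y (w • y - A y)‖ := Complex.abs_im_le_norm _
    _ ≤ ‖y‖ * ‖w • y - A y‖ := norm_inner_le_norm _ _
    _ = ‖w • y - A y‖ * ‖y‖ := mul_comm _ _
  rcases (norm_nonneg y).eq_or_lt with hy | hy
  · rw [← hy]; simp
  · exact le_of_mul_le_mul_right hsq hy

theorem IsSelfAdjoint.abs_im_mul_norm_le_norm_mul_norm_one_sub_smul_apply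
    (hA : IsSelfAdjoint A) (z : ℂ) (y : E) :
    |z.im| * ‖y‖ ≤ ‖z‖ * ‖(1 - z • A) y‖ := by
  rcases eq_or_ne z 0 with rfl | hz
  · simp
  have hfactor : (1 - z • A) y = z • (z⁻¹ • y - A y) := by
    simp [smul_sub, smul_smul, hz]
  have hnormSq : Complex.normSq z = ‖z‖ ^ 2 := Complex.normSq_eq_norm_sq z
  calc |z.im| * ‖y‖ = ‖z‖ ^ 2 * (|z⁻¹.im| * ‖y‖) := by
        rw [Complex.inv_im, abs_div, abs_neg, hnormSq, abs_of_nonneg (sq_nonneg ‖z‖)]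
        field_simp
    _ ≤ ‖z‖ ^ 2 * ‖z⁻¹ • y - A y‖ := by
        gcongr; exact hA.abs_im_mul_norm_le_norm_smul_sub_apply _ _
    _ = ‖z‖ * ‖(1 - z • A) y‖ := by rw [hfactor, norm_smul]; ring

theorem IsSelfAdjoint.isUnit_one_sub_smul (hA : IsSelfAdjoint A) {z : ℂ} (hz : z.im ≠ 0) :
    IsUnit (1 - z • A) := by
  have hz0 : z ≠ 0 := fun h => hz (by simp [h])
  have hnot : z⁻¹ ∉ spectrum ℂ A := fun hmem =>
    hz (by simpa [Complex.inv_im, hz0] using hA.im_eq_zero_of_mem_spectrum hmem)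
  have hfactor : 1 - z • A = z • (algebraMap ℂ (E →L[ℂ] E) z⁻¹ - A) := by
    rw [smul_sub, Algebra.algebraMap_eq_smul_one, smul_smul, mul_inv_cancel₀ hz0, one_smul]
  rw [hfactor]
  exact (spectrum.notMem_iff.mp hnot).smul (Units.mk0 z hz0)

theorem IsSelfAdjoint.exists_inverse_one_sub_smul (hA : IsSelfAdjoint A) {z : ℂ}
    (hz : z.im ≠ 0) :
    ∃ R : E →L[ℂ] E, (1 - z • A) * R = 1 ∧ R * (1 - z • A) = 1 ∧ ‖R‖ ≤ ‖z‖ / |z.im| := by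
  obtain ⟨u, hu⟩ := hA.isUnit_one_sub_smul hz
  refine ⟨↑u⁻¹, hu ▸ u.mul_inv, hu ▸ u.inv_mul, ?_⟩
  refine opNorm_le_of_comp_eq_id (hu ▸ u.mul_inv) (by positivity) fun y => ?_
  rw [div_mul_eq_mul_div, le_div_iff₀ (abs_pos.mpr hz)]
  linarith [hA.abs_im_mul_norm_le_norm_mul_norm_one_sub_smul_apply z y]

end

/-- **Resolvent bound on the cardioid.**  Let `A` be a bounded self-adjoint operator on
a complex Hilbert space `H` and let `λ = ρ e^{iφ}` with `ρ > 0`, `φ ∈ (-π, π)`, so that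
`√λ = √ρ e^{iφ/2}` is the principal square root.  Then `1 - i √λ A` is invertible and
the resolvent `R = (1 - i √λ A)⁻¹` satisfies `‖R‖ ≤ 1 / cos (φ/2)`. -/
theorem resolvent_bound (H : Type*) [NormedAddCommGroup H] [InnerProductSpace ℂ H]
    [CompleteSpace H] (A : H →L[ℂ] H) (hA : IsSelfAdjoint A)
    (ρ φ : ℝ) (hρ : 0 < ρ) (hφ : φ ∈ Set.Ioo (-Real.pi) Real.pi) :
    ∃ Res : H →L[ℂ] H,
      ((1 : H →L[ℂ] H) - (Complex.I * (Real.sqrt ρ * Complex.exp (Complex.I * (φ / 2)))) • A)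
          * Res = 1 ∧
      Res * ((1 : H →L[ℂ] H)
          - (Complex.I * (Real.sqrt ρ * Complex.exp (Complex.I * (φ / 2)))) • A) = 1 ∧
      ‖Res‖ ≤ 1 / Real.cos (φ / 2) := by
  set z : ℂ := Complex.I * (Real.sqrt ρ * Complex.exp (Complex.I * (φ / 2))) with hz
  have hexp :
      Complex.exp (Complex.I * (φ / 2)) = Complex.exp (((φ / 2 : ℝ) : ℂ) * Complex.I) := by
    push_cast; ring_nf
  have hz_norm : ‖z‖ = Real.sqrt ρ := by
    rw [hz, hexp, norm_mul, norm_mul, Complex.norm_I, Complex.norm_real, Real.norm_eq_abs,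
      abs_of_nonneg (Real.sqrt_nonneg ρ), Complex.norm_exp_ofReal_mul_I, one_mul, mul_one]
  have hz_im : z.im = Real.sqrt ρ * Real.cos (φ / 2) := by
    simp only [hz, hexp, Complex.mul_im, Complex.mul_re, Complex.I_re, Complex.I_im,
      Complex.ofReal_re, Complex.ofReal_im, Complex.exp_ofReal_mul_I_re,
      Complex.exp_ofReal_mul_I_im]
    ring
  have hcos : 0 < Real.cos (φ / 2) :=
    Real.cos_pos_of_mem_Ioo ⟨by linarith [hφ.1], by linarith [hφ.2]⟩
  have hsqrt : 0 < Real.sqrt ρ := Real.sqrt_pos.mpr hρ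
  obtain ⟨R, hright, hleft, hnorm⟩ :=
    hA.exists_inverse_one_sub_smul (z := z) (by rw [hz_im]; positivity)
  refine ⟨R, hright, hleft, hnorm.trans_eq ?_⟩
  rw [hz_norm, hz_im, abs_of_pos (by positivity)]
  field_simp
end

section
/- For N ≥ 1 an integer and z < 0 real, with Z(z,N) = ∫_{ℂ^N} e^{−‖φ‖² + (z/(2N))‖φ‖⁴} ∏_{p=1}^N (dRe φ_p dIm φ_p / π) and G_2(z,N) = Z(z,N)^{−1} ∫_{ℂ^N} (‖φ‖²/N) e^{−‖φ‖² + (z/(2N))‖φ‖⁴} ∏_{p=1}^N (dRe φ_p dIm φ_p / π), where ‖φ‖² = Σ_{p=1}^N |φ_p|², the function z ↦ log Z(z,N) is differentiable on (−∞,0) and the Schwinger–Dyson identity holds: G_2(z,N) = 1 + 2z · d/dz [ (1/N) log Z(z,N) ] for every z < 0. -/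
open MeasureTheory

/-- The partition function of the quartic complex `N`-vector model:
`Z(z,N) = ∫_{ℂ^N} e^{-‖φ‖² + (z/(2N))‖φ‖⁴} ∏ₚ (dReφₚ dImφₚ / π)`. -/
noncomputable def Zvec (N : ℕ) (z : ℝ) : ℝ :=
  (Real.pi ^ N)⁻¹ *
    ∫ φ : Fin N → ℂ,
      Real.exp (-(∑ p, ‖φ p‖ ^ 2)
        + z / (2 * N) * (∑ p, ‖φ p‖ ^ 2) ^ 2)

/-- The two-point function of the quartic complex `N`-vector model:
`G₂(z,N) = Z(z,N)⁻¹ ∫_{ℂ^N} (‖φ‖²/N) e^{-‖φ‖² + (z/(2N))‖φ‖⁴} ∏ₚ (dReφₚ dImφₚ / π)`. -/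
noncomputable def G2vec (N : ℕ) (z : ℝ) : ℝ :=
  (Zvec N z)⁻¹ *
    ((Real.pi ^ N)⁻¹ *
      ∫ φ : Fin N → ℂ,
        ((∑ p, ‖φ p‖ ^ 2) / N) *
          Real.exp (-(∑ p, ‖φ p‖ ^ 2)
            + z / (2 * N) * (∑ p, ‖φ p‖ ^ 2) ^ 2))

/-!
Both `Z` and the numerator of `G₂` are integrals of radial functions, so polar coordinates on
`ℂᴺ = ℝ²ᴺ` turn them into the one-dimensional moments `Iₘ(c) = ∫₀^∞ yᵐ e^{-y² + c y⁴} dy`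
with `c = z/(2N)`: `Z ∝ I_{2N-1}` and `G₂ = I_{2N+1} / (N I_{2N-1})`. Differentiating under the
integral sign gives `∂_c Iₘ = I_{m+4}`, and integrating `(y^{m+1} e^{-y² + c y⁴})'` over `(0, ∞)`
gives `2 I_{m+2} = (m+1) Iₘ + 4c I_{m+4}`; with `m = 2N-1` this is the Schwinger–Dyson identity.
-/

open Real Set

noncomputable def quarticMoment (m : ℕ) (c : ℝ) : ℝ :=
  ∫ y in Ioi (0 : ℝ), y ^ m * exp (-y ^ 2 + c * y ^ 4)

lemma integrableOn_pow_mul_exp_quartic (m : ℕ) {c : ℝ} (hc : c ≤ 0) :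
    IntegrableOn (fun y : ℝ => y ^ m * exp (-y ^ 2 + c * y ^ 4)) (Ioi 0) := by
  have hgauss : IntegrableOn (fun y : ℝ => y ^ (m : ℝ) * exp (-1 * y ^ 2)) (Ioi 0) :=
    integrableOn_rpow_mul_exp_neg_mul_sq one_pos (by linarith [m.cast_nonneg (α := ℝ)])
  refine hgauss.mono' (by fun_prop) ?_
  filter_upwards [ae_restrict_mem measurableSet_Ioi] with y (hy : 0 < y)
  rw [norm_mul, norm_pow, norm_of_nonneg hy.le, norm_of_nonneg (exp_pos _).le, ← rpow_natCast]
  gcongr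
  nlinarith [pow_nonneg hy.le 4]

lemma quarticMoment_pos (m : ℕ) {c : ℝ} (hc : c ≤ 0) : 0 < quarticMoment m c := by
  have hnonneg : 0 ≤ᵐ[volume.restrict (Ioi 0)] fun y : ℝ => y ^ m * exp (-y ^ 2 + c * y ^ 4) := by
    filter_upwards [ae_restrict_mem measurableSet_Ioi] with y (hy : 0 < y)
    positivity
  rw [quarticMoment, setIntegral_pos_iff_support_of_nonneg_ae hnonneg
    (integrableOn_pow_mul_exp_quartic m hc)]
  refine lt_of_lt_of_le (by simp [volume_Ioi]) (measure_mono (s := Ioi 0) fun y hy => ⟨?_, hy⟩)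
  exact (mul_pos (pow_pos hy m) (exp_pos _)).ne'

lemma hasDerivAt_quarticMoment (m : ℕ) {c : ℝ} (hc : c < 0) :
    HasDerivAt (quarticMoment m) (quarticMoment (m + 4) c) c := by
  have hbound : ∀ᵐ y ∂volume.restrict (Ioi (0 : ℝ)), ∀ w ∈ Metric.ball c (-c / 2),
      ‖y ^ (m + 4) * exp (-y ^ 2 + w * y ^ 4)‖ ≤ y ^ (m + 4) * exp (-y ^ 2 + c / 2 * y ^ 4) := by
    filter_upwards [ae_restrict_mem measurableSet_Ioi] with y (hy : 0 < y) w hw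
    have hw : w ≤ c / 2 := by linarith [(abs_lt.1 (mem_ball_iff_norm.1 hw)).2]
    rw [norm_of_nonneg (by positivity)]
    gcongr
  have hderiv (y w : ℝ) : HasDerivAt (fun w => y ^ m * exp (-y ^ 2 + w * y ^ 4))
      (y ^ (m + 4) * exp (-y ^ 2 + w * y ^ 4)) w := by
    have := ((hasDerivAt_mul_const (y ^ 4)).const_add (-y ^ 2)).exp.const_mul (y ^ m) (x := w)
    exact this.congr_deriv (by ring)
  exact (hasDerivAt_integral_of_dominated_loc_of_deriv_le (μ := volume.restrict (Ioi 0))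
    (F := fun w y => y ^ m * exp (-y ^ 2 + w * y ^ 4))
    (F' := fun w y => y ^ (m + 4) * exp (-y ^ 2 + w * y ^ 4))
    (Metric.ball_mem_nhds c (by linarith))
    (.of_forall fun w => by fun_prop) (integrableOn_pow_mul_exp_quartic m hc.le) (by fun_prop)
    hbound (integrableOn_pow_mul_exp_quartic (m + 4) (by linarith))
    (.of_forall fun y w _ => hderiv y w)).2

lemma quarticMoment_add_two (m : ℕ) {c : ℝ} (hc : c ≤ 0) :
    2 * quarticMoment (m + 2) c
      = (m + 1) * quarticMoment m c + 4 * c * quarticMoment (m + 4) c := by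
  have hint (k : ℕ) := integrableOn_pow_mul_exp_quartic k hc
  set f' : ℝ → ℝ := fun y => (m + 1) * (y ^ m * exp (-y ^ 2 + c * y ^ 4))
      - 2 * (y ^ (m + 2) * exp (-y ^ 2 + c * y ^ 4))
      + 4 * c * (y ^ (m + 4) * exp (-y ^ 2 + c * y ^ 4))
  have hf (y : ℝ) : HasDerivAt (fun y => y ^ (m + 1) * exp (-y ^ 2 + c * y ^ 4)) (f' y) y := by
    have hinner : HasDerivAt (fun y : ℝ => -y ^ 2 + c * y ^ 4) (-2 * y + 4 * c * y ^ 3) y := by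
      refine ((hasDerivAt_pow 2 y).neg.add ((hasDerivAt_pow 4 y).const_mul c)).congr_deriv ?_
      norm_num
      ring
    refine ((hasDerivAt_pow (m + 1) y).mul hinner.exp).congr_deriv ?_
    simp only [f']
    push_cast
    ring
  have hint₀₂ := ((hint m).const_mul ((m : ℝ) + 1)).sub ((hint (m + 2)).const_mul 2)
  have hint₄ := (hint (m + 4)).const_mul (4 * c)
  have hlim := tendsto_zero_of_hasDerivAt_of_integrableOn_Ioi (fun y _ => hf y)
    (hint₀₂.add hint₄) (hint (m + 1))
  have hftc := integral_Ioi_of_hasDerivAt_of_tendsto' (fun y _ => hf y) (hint₀₂.add hint₄) hlim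
  have hf0 : (0 : ℝ) ^ (m + 1) * exp (-0 ^ 2 + c * 0 ^ 4) = 0 := by simp
  simp only [f'] at hftc
  rw [integral_add (by exact hint₀₂) hint₄, integral_sub ((hint m).const_mul _) ((hint _).const_mul _),
    integral_const_mul, integral_const_mul, integral_const_mul, hf0] at hftc
  simp only [quarticMoment]
  linarith

noncomputable def complexUnitBallVolume (ι : Type*) [Fintype ι] : ℝ :=
  volume.real {φ : ι → ℂ | ∑ p, ‖φ p‖ ^ 2 < 1}

lemma integral_fun_sum_normSq_eq (ι : Type*) [Fintype ι] [Nonempty ι] (g : ℝ → ℝ) :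
    ∫ φ : ι → ℂ, g (∑ p, ‖φ p‖ ^ 2) = 2 * Fintype.card ι * complexUnitBallVolume ι *
      ∫ y in Ioi (0 : ℝ), y ^ (2 * Fintype.card ι - 1) * g (y ^ 2) := by
  let e := (PiLp.continuousLinearEquiv 2 ℝ (fun _ : ι => ℂ)).symm
  let μ : Measure (EuclideanSpace ℂ ι) := volume.map e
  have : μ.IsAddHaarMeasure := e.isAddHaarMeasure_map volume
  have hdim : Module.finrank ℝ (EuclideanSpace ℂ ι) = 2 * Fintype.card ι := by
    rw [← Module.finrank_mul_finrank ℝ ℂ, Complex.finrank_real_complex, finrank_euclideanSpace]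
  have : Nontrivial (EuclideanSpace ℂ ι) :=
    Module.nontrivial_of_finrank_pos (R := ℝ) (by rw [hdim]; positivity)
  have hball : μ.real (Metric.ball 0 1) = complexUnitBallVolume ι := by
    rw [measureReal_def, Measure.map_apply e.continuous.measurable measurableSet_ball,
      complexUnitBallVolume, measureReal_def]
    congr 2 with φ
    rw [mem_preimage, Metric.mem_ball, dist_zero_right, ← sq_lt_one_iff₀ (norm_nonneg _),
      EuclideanSpace.norm_sq_eq]
    rfl
  calc ∫ φ : ι → ℂ, g (∑ p, ‖φ p‖ ^ 2) = ∫ x, g (‖x‖ ^ 2) ∂μ := by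
        have := e.toHomeomorph.measurableEmbedding.integral_map (μ := volume)
          (fun x : EuclideanSpace ℂ ι => g (‖x‖ ^ 2))
        simpa [e, EuclideanSpace.norm_sq_eq] using this.symm
    _ = _ := by
        rw [integral_fun_norm_addHaar μ (fun r => g (r ^ 2)), hdim, hball]
        simp only [nsmul_eq_mul, smul_eq_mul]
        push_cast; ring

lemma complexUnitBallVolume_pos (ι : Type*) [Fintype ι] : 0 < complexUnitBallVolume ι := by
  set S := {φ : ι → ℂ | ∑ p, ‖φ p‖ ^ 2 < 1}
  have hopen : IsOpen S := isOpen_lt (by fun_prop) continuous_const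
  have hbdd : Bornology.IsBounded S := by
    refine (Metric.isBounded_ball (x := 0) (r := 1)).subset fun φ hφ => ?_
    rw [mem_ball_zero_iff, pi_norm_lt_iff one_pos]
    intro p
    replace hφ : ∑ p, ‖φ p‖ ^ 2 < 1 := hφ
    have := (Finset.single_le_sum (fun q _ => sq_nonneg ‖φ q‖) (Finset.mem_univ p)).trans_lt hφ
    nlinarith [norm_nonneg (φ p)]
  exact ENNReal.toReal_pos (hopen.measure_ne_zero volume ⟨0, by simp [S]⟩) hbdd.measure_lt_top.ne

lemma Zvec_eq_quarticMoment (N : ℕ) (hN : 1 ≤ N) (w : ℝ) :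
    Zvec N w = (π ^ N)⁻¹ * (2 * N * complexUnitBallVolume (Fin N)) *
      quarticMoment (2 * N - 1) (w / (2 * N)) := by
  have : Nonempty (Fin N) := ⟨⟨0, hN⟩⟩
  rw [Zvec, integral_fun_sum_normSq_eq (Fin N) fun s => exp (-s + w / (2 * N) * s ^ 2),
    Fintype.card_fin, quarticMoment]
  simp only [← pow_mul, Nat.reduceMul]
  ring

lemma G2vec_eq_quarticMoment (N : ℕ) (hN : 1 ≤ N) (w : ℝ) :
    G2vec N w = quarticMoment (2 * N + 1) (w / (2 * N)) /
      (N * quarticMoment (2 * N - 1) (w / (2 * N))) := by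
  have : Nonempty (Fin N) := ⟨⟨0, hN⟩⟩
  have hN0 : (N : ℝ) ≠ 0 := by positivity
  have hV := (complexUnitBallVolume_pos (Fin N)).ne'
  have hnum : ∫ φ : Fin N → ℂ, (∑ p, ‖φ p‖ ^ 2) / N *
      exp (-(∑ p, ‖φ p‖ ^ 2) + w / (2 * N) * (∑ p, ‖φ p‖ ^ 2) ^ 2)
      = 2 * complexUnitBallVolume (Fin N) * quarticMoment (2 * N + 1) (w / (2 * N)) := by
    rw [integral_fun_sum_normSq_eq (Fin N) fun s => s / N * exp (-s + w / (2 * N) * s ^ 2),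
      Fintype.card_fin, quarticMoment, ← integral_const_mul, ← integral_const_mul]
    refine integral_congr_ae (.of_forall fun y => ?_)
    rw [show 2 * N + 1 = 2 * N - 1 + 2 by omega]
    field_simp
    ring
  rw [G2vec, hnum, Zvec_eq_quarticMoment N hN]
  field_simp

/-- **Schwinger–Dyson identity for the quartic vector model.**
For `N ≥ 1`, the function `z ↦ log Z(z,N)` is differentiable on `(-∞,0)` and
`G₂(z,N) = 1 + 2z · d/dz [(1/N) log Z(z,N)]` for every `z < 0`. -/
theorem G2vec_schwinger_dyson (N : ℕ) (hN : 1 ≤ N) (z : ℝ) (hz : z < 0) :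
    DifferentiableAt ℝ (fun y => Real.log (Zvec N y)) z ∧
      G2vec N z = 1 + 2 * z * deriv (fun y => (1 / N : ℝ) * Real.log (Zvec N y)) z := by
  set m := 2 * N - 1
  set A := (π ^ N)⁻¹ * (2 * N * complexUnitBallVolume (Fin N))
  have hA : 0 < A := by have := complexUnitBallVolume_pos (Fin N); positivity
  have hZ (w : ℝ) : Zvec N w = A * quarticMoment m (w / (2 * N)) := Zvec_eq_quarticMoment N hN w
  set c := z / (2 * N) with hc_def
  have hc : c < 0 := div_neg_of_neg_of_pos hz (by positivity)
  have hG : G2vec N z = quarticMoment (m + 2) c / (N * quarticMoment m c) := by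
    rw [G2vec_eq_quarticMoment N hN, show 2 * N + 1 = m + 2 by omega]
  have hZderiv : HasDerivAt (Zvec N) (A * (quarticMoment (m + 4) c / (2 * N))) z := by
    have hscale : HasDerivAt (fun w : ℝ => w / (2 * N)) (1 / (2 * N)) z :=
      (hasDerivAt_id z).div_const _
    rw [funext hZ]
    refine (((hasDerivAt_quarticMoment m hc).comp z hscale).const_mul A).congr_deriv ?_
    ring
  have hZpos : 0 < Zvec N z := by rw [hZ]; exact mul_pos hA (quarticMoment_pos m hc.le)
  have hlog := hZderiv.log hZpos.ne'
  refine ⟨hlog.differentiableAt, ?_⟩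
  have hibp := quarticMoment_add_two m hc.le
  rw [show (m : ℝ) + 1 = 2 * N by norm_cast; omega] at hibp
  have hIm := (quarticMoment_pos m hc.le).ne'
  rw [(hlog.const_mul (1 / N : ℝ)).deriv, hG, hZ, ← hc_def]
  clear_value c
  have hz_eq : z = 2 * N * c := by rw [hc_def]; field_simp
  field_simp
  linear_combination (N / 2 : ℝ) * hibp - quarticMoment (m + 4) c * hz_eq
end

section
/- For N ≥ 1 an integer and z < 0 real, define Z(z,N) = ∫_{ℂ^N} e^{−‖φ‖² + (z/(2N))‖φ‖⁴} ∏_{p=1}^N (dRe φ_p dIm φ_p / π), where ‖φ‖² = Σ_{p=1}^N |φ_p|². Then for every real z < 0, setting s = (1 − √(1 − 4z))/2, one has lim_{N→∞} (1/N) log Z(z,N) = −s²/(2z) − log(1 − s). -/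
open MeasureTheory

/-!
Since `∑ₚ |φₚ|²` is the squared Euclidean norm on `ℝ^{2N}`, polar coordinates turn `Z(z,N)` into a
radial integral, and the normalization `Z(0,N) = 1` (a Gaussian integral) cancels the angular
constant. After the substitution `‖φ‖² = N e^{2y}`, `Z(z,N)` is the ratio of the integrals
`∫ exp (N h_c(e^{2y})) dy` at `c = z` and `c = 0`, where `h_c(u) = log u - u + c u²/2`
(`radialAction c u`). By Laplace's principle `(1/N) log ∫ exp (N f)` tends to `max f`, and for
`c ≤ 0` the function `h_c` is maximal at the positive root `u₀` of `c u² - u + 1 = 0`; for `c = z`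
this is `u₀ = 1/(1-s)`, and `h_z(1/(1-s)) - h_0(1)` is the stated limit.
-/

open Set Filter Real Topology

theorem tendsto_one_div_mul_sub_one_mul_add (c d : ℝ) :
    Tendsto (fun N : ℕ => (1 / N : ℝ) * ((N - 1) * c + d)) atTop (𝓝 c) := by
  have h := (tendsto_const_div_atTop_nhds_zero_nat (d - c)).const_add c
  rw [add_zero] at h
  refine h.congr' ?_
  filter_upwards [eventually_ne_atTop 0] with N hN
  field_simp
  ring

theorem exp_nat_mul_le_of_le {N : ℕ} (hN : 1 ≤ N) {x M : ℝ} (hx : x ≤ M) :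
    exp (N * x) ≤ exp ((N - 1) * M) * exp x := by
  have : (1 : ℝ) ≤ N := by exact_mod_cast hN
  rw [← exp_add, exp_le_exp]
  nlinarith

section Laplace

variable {X : Type*} [MeasurableSpace X] {μ : Measure X} {f : X → ℝ} {N : ℕ}

theorem integral_exp_nat_mul_le (hint : Integrable (fun x => exp (f x)) μ) {M : ℝ}
    (hmax : ∀ x, f x ≤ M) (hN : 1 ≤ N) :
    ∫ x, exp (N * f x) ∂μ ≤ exp ((N - 1) * M) * ∫ x, exp (f x) ∂μ := by
  rw [← integral_const_mul]
  exact integral_mono_of_nonneg (.of_forall fun x => (exp_pos _).le) (hint.const_mul _)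
    (.of_forall fun x => exp_nat_mul_le_of_le hN (hmax x))

variable [TopologicalSpace X] [OpensMeasurableSpace X]

theorem integrable_exp_nat_mul (hf : Continuous f) (hint : Integrable (fun x => exp (f x)) μ)
    {M : ℝ} (hmax : ∀ x, f x ≤ M) (hN : 1 ≤ N) :
    Integrable (fun x => exp (N * f x)) μ :=
  (hint.const_mul (exp ((N - 1) * M))).mono' (by fun_prop)
    (.of_forall fun x => by
      rw [norm_of_nonneg (exp_pos _).le]
      exact exp_nat_mul_le_of_le hN (hmax x))

theorem le_integral_exp_nat_mul (hf : Continuous f) (hint : Integrable (fun x => exp (f x)) μ)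
    {M : ℝ} (hmax : ∀ x, f x ≤ M) (hN : 1 ≤ N) (ℓ : ℝ) :
    exp ((N - 1) * ℓ) * ∫ x in {x | ℓ < f x}, exp (f x) ∂μ ≤ ∫ x, exp (N * f x) ∂μ := by
  have hS : MeasurableSet {x | ℓ < f x} := measurableSet_lt measurable_const hf.measurable
  have hN' : (1 : ℝ) ≤ N := by exact_mod_cast hN
  rw [← integral_const_mul]
  calc ∫ x in {x | ℓ < f x}, exp ((N - 1) * ℓ) * exp (f x) ∂μ
      ≤ ∫ x in {x | ℓ < f x}, exp (N * f x) ∂μ := by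
        refine setIntegral_mono_on ((hint.const_mul _).integrableOn)
          (integrable_exp_nat_mul hf hint hmax hN).integrableOn hS fun x hx => ?_
        rw [← exp_add, exp_le_exp]
        have : ℓ < f x := hx
        nlinarith
    _ ≤ ∫ x, exp (N * f x) ∂μ :=
        setIntegral_le_integral (integrable_exp_nat_mul hf hint hmax hN)
          (.of_forall fun x => (exp_pos _).le)

theorem tendsto_one_div_mul_log_integral_exp_nat_mul [μ.IsOpenPosMeasure] (hf : Continuous f)
    (hint : Integrable (fun x => exp (f x)) μ) {x₀ : X} (hmax : ∀ x, f x ≤ f x₀) :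
    Tendsto (fun N : ℕ => (1 / N : ℝ) * log (∫ x, exp (N * f x) ∂μ)) atTop (𝓝 (f x₀)) := by
  have : Nonempty X := ⟨x₀⟩
  have hlevel_pos : ∀ ℓ < f x₀, 0 < ∫ x in {x | ℓ < f x}, exp (f x) ∂μ := fun ℓ hℓ => by
    have : NeZero (μ.restrict {x | ℓ < f x}) := ⟨by
      rw [Ne, Measure.restrict_eq_zero]
      exact (isOpen_lt continuous_const hf).measure_ne_zero μ ⟨x₀, hℓ⟩⟩
    exact integral_exp_pos hint.integrableOn
  have hlower : ∀ ℓ < f x₀, ∀ᶠ N : ℕ in atTop, (1 / N : ℝ) * ((N - 1) * ℓ +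
      log (∫ x in {x | ℓ < f x}, exp (f x) ∂μ)) ≤ (1 / N : ℝ) * log (∫ x, exp (N * f x) ∂μ) :=
    fun ℓ hℓ => by
      filter_upwards [eventually_ge_atTop 1] with N hN
      gcongr
      calc _ = log (exp ((N - 1) * ℓ) * ∫ x in {x | ℓ < f x}, exp (f x) ∂μ) := by
            rw [log_mul (exp_pos _).ne' (hlevel_pos ℓ hℓ).ne', log_exp]
        _ ≤ _ := log_le_log (by have := hlevel_pos ℓ hℓ; positivity)
            (le_integral_exp_nat_mul hf hint hmax hN ℓ)
  refine tendsto_order.2 ⟨fun m hm => ?_, fun m hm => ?_⟩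
  · have hℓ : (m + f x₀) / 2 < f x₀ := by linarith
    filter_upwards [hlower _ hℓ, (tendsto_one_div_mul_sub_one_mul_add _ _).eventually
      (lt_mem_nhds (show m < (m + f x₀) / 2 by linarith))] with N h₁ h₂
    exact h₂.trans_le h₁
  · filter_upwards [eventually_ge_atTop 1,
      (tendsto_one_div_mul_sub_one_mul_add _ (log (∫ x, exp (f x) ∂μ))).eventually
        (gt_mem_nhds hm)] with N hN h₂
    refine lt_of_le_of_lt ?_ h₂
    have hI : 0 < ∫ x, exp (N * f x) ∂μ :=
      integral_exp_pos (integrable_exp_nat_mul hf hint hmax hN)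
    gcongr
    calc _ ≤ log (exp ((N - 1) * f x₀) * ∫ x, exp (f x) ∂μ) :=
          log_le_log hI (integral_exp_nat_mul_le hint hmax hN)
      _ = _ := by rw [log_mul (exp_pos _).ne' (integral_exp_pos hint).ne', log_exp]

end Laplace

noncomputable def euclideanEquivComplexPi (N : ℕ) :
    EuclideanSpace ℝ (Fin N ⊕ Fin N) ≃ᵐ (Fin N → ℂ) :=
  (MeasurableEquiv.toLp 2 ((Fin N ⊕ Fin N) → ℝ)).symm.trans
    ((MeasurableEquiv.sumPiEquivProdPi fun _ => ℝ).trans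
      ((MeasurableEquiv.arrowProdEquivProdArrow ℝ ℝ (Fin N)).symm.trans
        (MeasurableEquiv.piCongrRight fun _ => Complex.measurableEquivRealProd.symm)))

theorem measurePreserving_euclideanEquivComplexPi (N : ℕ) :
    MeasurePreserving (euclideanEquivComplexPi N) :=
  (EuclideanSpace.volume_preserving_symm_measurableEquiv_toLp _).trans
    ((volume_measurePreserving_sumPiEquivProdPi _).trans
      (((volume_measurePreserving_arrowProdEquivProdArrow ℝ ℝ (Fin N)).symm _).trans
        (volume_preserving_pi fun _ => Complex.volume_preserving_equiv_real_prod.symm _)))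

theorem euclideanEquivComplexPi_apply (N : ℕ) (x : EuclideanSpace ℝ (Fin N ⊕ Fin N)) (p : Fin N) :
    euclideanEquivComplexPi N x p = ⟨x (.inl p), x (.inr p)⟩ :=
  rfl

theorem sum_norm_sq_euclideanEquivComplexPi (N : ℕ) (x : EuclideanSpace ℝ (Fin N ⊕ Fin N)) :
    ∑ p, ‖euclideanEquivComplexPi N x p‖ ^ 2 = ‖x‖ ^ 2 := by
  rw [EuclideanSpace.norm_sq_eq, Fintype.sum_sum_type, ← Finset.sum_add_distrib]
  refine Finset.sum_congr rfl fun p _ => ?_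
  rw [euclideanEquivComplexPi_apply, Complex.sq_norm, Complex.normSq_mk, Real.norm_eq_abs,
    Real.norm_eq_abs, sq_abs, sq_abs]
  ring

theorem integral_sum_norm_sq_eq (N : ℕ) (F : ℝ → ℝ) :
    ∫ φ : Fin N → ℂ, F (∑ p, ‖φ p‖ ^ 2) = ∫ x : EuclideanSpace ℝ (Fin N ⊕ Fin N), F (‖x‖ ^ 2) := by
  rw [← (measurePreserving_euclideanEquivComplexPi N).integral_comp
    (euclideanEquivComplexPi N).measurableEmbedding]
  simp_rw [sum_norm_sq_euclideanEquivComplexPi]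

theorem Zvec_zero (N : ℕ) : Zvec N 0 = 1 := by
  have h := GaussianFourier.integral_rexp_neg_mul_sq_norm
    (V := EuclideanSpace ℝ (Fin N ⊕ Fin N)) one_pos
  rw [finrank_euclideanSpace, Fintype.card_sum, Fintype.card_fin] at h
  rw [Zvec, integral_sum_norm_sq_eq N fun t => exp (-t + 0 / (2 * N) * t ^ 2)]
  simp only [zero_div, zero_mul, add_zero]
  have hN : ((N + N : ℕ) : ℝ) / 2 = (N : ℕ) := by push_cast; ring
  simp only [neg_one_mul, div_one, hN, rpow_natCast] at h
  rw [h, inv_mul_cancel₀ (pow_ne_zero _ pi_ne_zero)]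

theorem integral_Ioi_zero_eq_integral_exp_mul (g : ℝ → ℝ) :
    ∫ r in Ioi 0, g r = ∫ y, exp y * g (exp y) := by
  have h := integral_image_eq_integral_abs_deriv_smul MeasurableSet.univ
    (fun y _ => (hasDerivAt_exp y).hasDerivWithinAt) exp_injective.injOn g
  simpa [image_univ, range_exp, abs_of_pos (exp_pos _)] using h

theorem integrableOn_Ioi_zero_iff_integrable_exp_mul (g : ℝ → ℝ) :
    IntegrableOn g (Ioi 0) ↔ Integrable fun y => exp y * g (exp y) := by
  have h := integrableOn_image_iff_integrableOn_abs_deriv_smul MeasurableSet.univ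
    (fun y _ => (hasDerivAt_exp y).hasDerivWithinAt) exp_injective.injOn g
  simpa [image_univ, range_exp, abs_of_pos (exp_pos _)] using h

noncomputable def radialAction (c u : ℝ) : ℝ := log u - u + c * u ^ 2 / 2

theorem exp_nat_mul_radialAction (c : ℝ) (N : ℕ) {u : ℝ} (hu : 0 < u) :
    exp (N * radialAction c u) = u ^ N * exp (N * (-u + c * u ^ 2 / 2)) := by
  rw [radialAction, show N * (log u - u + c * u ^ 2 / 2) = N * log u + N * (-u + c * u ^ 2 / 2)
    by ring, exp_add, exp_nat_mul, exp_log hu]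

theorem radial_integrand_eq (c : ℝ) {N : ℕ} (hN : 1 ≤ N) {r y : ℝ}
    (hr : r ^ 2 = N * exp (2 * y)) :
    r * r ^ (2 * N - 1) * exp (-r ^ 2 + c / (2 * N) * (r ^ 2) ^ 2) =
      N ^ N * exp (N * radialAction c (exp (2 * y))) := by
  have hN' : (0 : ℝ) < N := by exact_mod_cast hN
  rw [← pow_succ', Nat.sub_add_cancel (by omega), pow_mul, hr,
    exp_nat_mul_radialAction _ _ (exp_pos _), mul_pow, mul_assoc]
  congr 3
  field_simp

theorem exists_Zvec_eq_mul_integral (N : ℕ) (hN : 1 ≤ N) :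
    ∃ A : ℝ, ∀ c, Zvec N c = A * ∫ y, exp (N * radialAction c (exp (2 * y))) := by
  have : Nonempty (Fin N) := ⟨⟨0, hN⟩⟩
  have hdim : Module.finrank ℝ (EuclideanSpace ℝ (Fin N ⊕ Fin N)) = 2 * N := by
    rw [finrank_euclideanSpace, Fintype.card_sum, Fintype.card_fin, two_mul]
  have hshift (y : ℝ) : exp (y + log N / 2) ^ 2 = N * exp (2 * y) := by
    rw [← exp_nat_mul, Nat.cast_ofNat, show 2 * (y + log N / 2) = 2 * y + log N by ring, exp_add,
      exp_log (by exact_mod_cast hN), mul_comm]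
  refine ⟨(π ^ N)⁻¹ *
    (2 * N * volume.real (Metric.ball (0 : EuclideanSpace ℝ (Fin N ⊕ Fin N)) 1)) * N ^ N,
    fun c => ?_⟩
  rw [Zvec, integral_sum_norm_sq_eq N fun t => exp (-t + c / (2 * N) * t ^ 2),
    integral_fun_norm_addHaar volume fun r => exp (-r ^ 2 + c / (2 * N) * (r ^ 2) ^ 2), hdim,
    integral_Ioi_zero_eq_integral_exp_mul,
    ← integral_add_right_eq_self _ (log N / 2)]
  simp only [smul_eq_mul, radial_integrand_eq c hN (hshift _), ← mul_assoc, integral_const_mul]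
  ring

theorem Zvec_eq_div (N : ℕ) (hN : 1 ≤ N) (c : ℝ) :
    Zvec N c = (∫ y, exp (N * radialAction c (exp (2 * y)))) /
      ∫ y, exp (N * radialAction 0 (exp (2 * y))) := by
  obtain ⟨A, hA⟩ := exists_Zvec_eq_mul_integral N hN
  have h0 := hA 0
  rw [Zvec_zero] at h0
  rw [hA c, eq_div_iff (right_ne_zero_of_mul (h0.symm.trans_ne one_ne_zero)), mul_right_comm,
    ← h0, one_mul]

theorem radialAction_exp (c t : ℝ) : radialAction c (exp t) = t - exp t + c * exp t ^ 2 / 2 := by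
  rw [radialAction, log_exp]

theorem radialAction_le_neg_one {c u : ℝ} (hc : c ≤ 0) (hu : 0 < u) : radialAction c u ≤ -1 := by
  have := log_le_sub_one_of_pos hu
  have : c * u ^ 2 ≤ 0 := mul_nonpos_of_nonpos_of_nonneg hc (sq_nonneg u)
  rw [radialAction]
  linarith

theorem radialAction_le_of_root {c u₀ u : ℝ} (hc : c ≤ 0) (hu₀ : 0 < u₀)
    (hroot : c * u₀ ^ 2 - u₀ + 1 = 0) (hu : 0 < u) : radialAction c u ≤ radialAction c u₀ := by
  have hlog : log u - log u₀ ≤ u / u₀ - 1 := by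
    rw [← log_div hu.ne' hu₀.ne']
    exact log_le_sub_one_of_pos (div_pos hu hu₀)
  have hinv : 1 / u₀ = 1 - c * u₀ := by
    field_simp
    linarith
  rw [show u / u₀ - 1 = (u - u₀) * (1 / u₀) by field_simp, hinv] at hlog
  rw [radialAction, radialAction]
  nlinarith [mul_nonneg (neg_nonneg.2 hc) (sq_nonneg (u - u₀))]

theorem continuous_radialAction_exp_two_mul (c : ℝ) :
    Continuous fun y => radialAction c (exp (2 * y)) := by
  simp only [radialAction_exp]
  fun_prop

theorem integrable_exp_radialAction_exp_two_mul {c : ℝ} (hc : c ≤ 0) :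
    Integrable fun y => exp (radialAction c (exp (2 * y))) := by
  have hg : Integrable fun y => exp y * (exp y * exp (-1 * exp y ^ 2)) :=
    (integrableOn_Ioi_zero_iff_integrable_exp_mul _).1
      (integrable_mul_exp_neg_mul_sq one_pos).integrableOn
  refine hg.mono'
    (continuous_exp.comp (continuous_radialAction_exp_two_mul c)).aestronglyMeasurable
    (.of_forall fun y => ?_)
  have hsq : exp y ^ 2 = exp (2 * y) := by rw [← exp_nat_mul, Nat.cast_ofNat]
  rw [norm_of_nonneg (exp_pos _).le, ← exp_add, ← exp_add, hsq, exp_le_exp, radialAction_exp]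
  nlinarith [mul_nonpos_of_nonpos_of_nonneg hc (sq_nonneg (exp (2 * y)))]

theorem tendsto_log_integral_exp_radialAction {c u₀ : ℝ} (hc : c ≤ 0) (hu₀ : 0 < u₀)
    (hroot : c * u₀ ^ 2 - u₀ + 1 = 0) :
    Tendsto (fun N : ℕ => (1 / N : ℝ) * log (∫ y, exp (N * radialAction c (exp (2 * y)))))
      atTop (𝓝 (radialAction c u₀)) := by
  have h := tendsto_one_div_mul_log_integral_exp_nat_mul (μ := volume)
    (continuous_radialAction_exp_two_mul c) (integrable_exp_radialAction_exp_two_mul hc)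
    (x₀ := log u₀ / 2) fun y => ?_
  · rwa [mul_div_cancel₀ _ two_ne_zero, exp_log hu₀] at h
  · rw [mul_div_cancel₀ _ two_ne_zero, exp_log hu₀]
    exact radialAction_le_of_root hc hu₀ hroot (exp_pos _)

theorem integral_exp_nat_mul_radialAction_pos {c : ℝ} (hc : c ≤ 0) {N : ℕ} (hN : 1 ≤ N) :
    0 < ∫ y, exp (N * radialAction c (exp (2 * y))) :=
  integral_exp_pos (integrable_exp_nat_mul (continuous_radialAction_exp_two_mul c)
    (integrable_exp_radialAction_exp_two_mul hc)
    (fun _ => radialAction_le_neg_one hc (exp_pos _)) hN)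

theorem tendsto_log_Zvec {z s : ℝ} (hs : s < 0) (hsz : s * (1 - s) = z) :
    Tendsto (fun N : ℕ => (1 / N : ℝ) * log (Zvec N z)) atTop
      (𝓝 (radialAction z (1 - s)⁻¹ - radialAction 0 1)) := by
  have hz : z ≤ 0 := hsz ▸ mul_nonpos_of_nonpos_of_nonneg hs.le (by linarith)
  have hroot : z * ((1 - s)⁻¹) ^ 2 - (1 - s)⁻¹ + 1 = 0 := by
    have : 1 - s ≠ 0 := by linarith
    field_simp
    linear_combination -hsz
  refine ((tendsto_log_integral_exp_radialAction hz (inv_pos.2 (by linarith)) hroot).sub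
    (tendsto_log_integral_exp_radialAction le_rfl one_pos (by norm_num))).congr' ?_
  filter_upwards [eventually_ge_atTop 1] with N hN
  rw [Zvec_eq_div N hN, log_div (integral_exp_nat_mul_radialAction_pos hz hN).ne'
    (integral_exp_nat_mul_radialAction_pos le_rfl hN).ne', mul_sub]

/-- **Large-`N` limit of the free energy of the quartic vector model.**
For every real `z < 0`, setting `s = (1 - √(1-4z))/2`,
`lim_{N→∞} (1/N) log Z(z,N) = -s²/(2z) - log (1-s)`. -/
theorem free_energy_tendsto (z : ℝ) (hz : z < 0) :
    Filter.Tendsto (fun N : ℕ => (1 / N : ℝ) * Real.log (Zvec N z)) Filter.atTop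
      (nhds (-((1 - Real.sqrt (1 - 4 * z)) / 2) ^ 2 / (2 * z)
        - Real.log (1 - (1 - Real.sqrt (1 - 4 * z)) / 2))) := by
  set s := (1 - √(1 - 4 * z)) / 2 with hs_def
  have hsq : √(1 - 4 * z) ^ 2 = 1 - 4 * z := sq_sqrt (by linarith)
  have hs : s < 0 := by
    have : 1 < √(1 - 4 * z) := by nlinarith [sqrt_nonneg (1 - 4 * z)]
    linarith
  have hsz : s * (1 - s) = z := by linear_combination (-1 / 4 : ℝ) * hsq
  convert tendsto_log_Zvec hs hsz using 2
  have h1s : 1 - s ≠ 0 := by linarith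
  rw [radialAction, radialAction, log_inv, log_one, ← hsz]
  field_simp
  ring
end
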